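/- arXiv:1810.06984 — 10 statements merged into one kernel-verified Lean document; each statement's English description precedes it below -/
import Mathlib

section
/- Let G be a finite simple graph with chromatic number χ(G) = χ ≥ 2. Then for every integer k ≥ 1, mc_k(G) = ⌊(k−1)/(χ−1)⌋. -/
open SimpleGraph

/-- `w_ψ`-style: `mcA k G` is the max over labelings `ψ : V → {1,…,k}` of the
minimum of `|ψ u − ψ v|` over edges, phrased via `sSup`. -/
noncomputable def mcA {V : Type*} (k : ℕ) (G : SimpleGraph V) : ℕ :=
  sSup {m | ∃ ψ : V → ℕ, (∀ v, ψ v ∈ Finset.Icc 1 k) ∧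
    ∀ u v, G.Adj u v → m ≤ Nat.dist (ψ u) (ψ v)}

/-- No-hole anti-n-labeling number: `ψ` is a bijection from `V` onto `{1,…,n}`,
`n = |V|`. -/
noncomputable def mcNH {V : Type*} [Fintype V] (G : SimpleGraph V) : ℕ :=
  sSup {m | ∃ ψ : V → ℕ, Set.BijOn ψ Set.univ (Set.Icc 1 (Fintype.card V)) ∧
    ∀ u v, G.Adj u v → m ≤ Nat.dist (ψ u) (ψ v)}

lemma same_div_dist_lt {a b m : ℕ} (hm : 0 < m) (h : a / m = b / m) :
    Nat.dist a b < m := by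
  have ha : m * (a / m) + a % m = a := Nat.div_add_mod a m
  have hb : m * (b / m) + b % m = b := Nat.div_add_mod b m
  rw [h] at ha
  have ha' := Nat.mod_lt a hm
  have hb' := Nat.mod_lt b hm
  rw [Nat.dist]
  generalize m * (b / m) = c at ha hb
  omega

theorem stmt_2 {V : Type*} [Fintype V] (G : SimpleGraph V) (χ k : ℕ)
    (hχ : G.chromaticNumber = χ) (hχ2 : 2 ≤ χ) (hk : 1 ≤ k) :
    mcA k G = (k - 1) / (χ - 1) := by
  set q := (k - 1) / (χ - 1) with hq
  -- G has an edge
  obtain ⟨u₀, v₀, huv⟩ : ∃ u v, G.Adj u v := by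
    by_contra h
    push_neg at h
    have hcol : G.Colorable 1 := ⟨Coloring.mk (fun _ => 0) (fun {u v} hadj => absurd hadj (by simpa using h u v))⟩
    have := hcol.chromaticNumber_le
    rw [hχ] at this
    exact absurd (Nat.cast_le.mp this) (by omega)
  -- a coloring with χ colors
  obtain ⟨C⟩ : G.Colorable χ := chromaticNumber_le_iff_colorable.mp (le_of_eq hχ)
  -- q is achieved
  have hqmem : q ∈ {m | ∃ ψ : V → ℕ, (∀ v, ψ v ∈ Finset.Icc 1 k) ∧
      ∀ u v, G.Adj u v → m ≤ Nat.dist (ψ u) (ψ v)} := by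
    refine ⟨fun v => 1 + (C v).val * q, fun v => ?_, fun u v hadj => ?_⟩
    · have hlt : (C v).val ≤ χ - 1 := by have := (C v).isLt; omega
      have : (C v).val * q ≤ (χ - 1) * q := Nat.mul_le_mul_right q hlt
      have h2 : (χ - 1) * q ≤ k - 1 := by rw [mul_comm]; exact Nat.div_mul_le_self _ _
      simp only [Finset.mem_Icc]
      constructor
      · omega
      · have := Nat.mul_div_le (k - 1) (χ - 1)
        omega
    · have hne : C u ≠ C v := C.valid hadj
      have hne' : (C u).val ≠ (C v).val := fun h => hne (Fin.ext h)
      rw [Nat.dist_add_add_left, Nat.dist_mul_right]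
      calc q = 1 * q := (one_mul q).symm
        _ ≤ Nat.dist (C u).val (C v).val * q :=
          Nat.mul_le_mul_right q (Nat.dist_pos_of_ne hne')
  -- bounded above
  have hbdd : ∀ m ∈ {m | ∃ ψ : V → ℕ, (∀ v, ψ v ∈ Finset.Icc 1 k) ∧
      ∀ u v, G.Adj u v → m ≤ Nat.dist (ψ u) (ψ v)}, m ≤ q := by
    rintro m ⟨ψ, hψ, hdist⟩
    rcases Nat.eq_zero_or_pos m with rfl | hm
    · exact Nat.zero_le _
    -- build a coloring with (k-1)/m + 1 colors
    have hcol : G.Colorable ((k - 1) / m + 1) := by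
      refine ⟨Coloring.mk (fun v => ⟨(ψ v - 1) / m, ?_⟩) ?_⟩
      · have h1 := (Finset.mem_Icc.mp (hψ v)).1
        have h2 := (Finset.mem_Icc.mp (hψ v)).2
        have : (ψ v - 1) / m ≤ (k - 1) / m := Nat.div_le_div_right (by omega)
        omega
      · intro a b hadj h
        simp only [Fin.mk.injEq] at h
        have hd := same_div_dist_lt hm h
        have h1 := (Finset.mem_Icc.mp (hψ a)).1
        have h2 := (Finset.mem_Icc.mp (hψ b)).1
        have : Nat.dist (ψ a) (ψ b) = Nat.dist (ψ a - 1) (ψ b - 1) := by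
          rw [Nat.dist, Nat.dist]; omega
        have := hdist a b hadj
        omega
    have hle : (χ : ℕ∞) ≤ ((k - 1) / m + 1 : ℕ) := hχ ▸ hcol.chromaticNumber_le
    have hle' : χ ≤ (k - 1) / m + 1 := Nat.cast_le.mp hle
    have : (χ - 1) * m ≤ k - 1 := by
      have : χ - 1 ≤ (k - 1) / m := by omega
      exact (Nat.le_div_iff_mul_le hm).mp this
    exact (Nat.le_div_iff_mul_le (by omega : 0 < χ - 1)).mpr (by linarith [Nat.mul_comm m (χ-1)])
  refine le_antisymm (csSup_le ⟨q, hqmem⟩ hbdd) (le_csSup ⟨q, hbdd⟩ hqmem)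
end

section
/- For a connected graph G on n ≥ 2 vertices with maximum degree Δ, mc^{nh}_n(G) ≤ n − Δ. -/
open SimpleGraph

theorem stmt_7 {V : Type*} [Fintype V] [DecidableEq V] (G : SimpleGraph V)
    [DecidableRel G.Adj] (hconn : G.Connected) (hn : 2 ≤ Fintype.card V) :
    mcNH G ≤ Fintype.card V - G.maxDegree := by
  classical
  have hne : Nonempty V := Fintype.card_pos_iff.mp (by omega)
  apply csSup_le'
  rintro m ⟨ψ, hbij, hedge⟩
  set n := Fintype.card V with hn_def
  rcases Nat.eq_zero_or_pos m with hm | hm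
  · simp [hm]
  obtain ⟨u, hu⟩ := G.exists_maximal_degree_vertex
  have hinj : Function.Injective ψ := fun a b h =>
    hbij.injOn (Set.mem_univ a) (Set.mem_univ b) h
  have hmem : ∀ v, ψ v ∈ Set.Icc 1 n := fun v => hbij.mapsTo (Set.mem_univ v)
  set a := ψ u with ha
  have ha1 : 1 ≤ a := (hmem u).1
  have ha2 : a ≤ n := (hmem u).2
  -- there is a vertex adjacent to u
  obtain ⟨v, hadj⟩ : ∃ v, G.Adj u v := by
    obtain ⟨w, hw⟩ := Fintype.exists_ne_of_one_lt_card (by omega) u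
    obtain ⟨p⟩ := hconn.preconnected u w
    cases p with
    | nil => exact absurd rfl hw
    | cons h q => exact ⟨_, h⟩
  have hmn : m ≤ n := by
    have h1 := hedge u v hadj
    have h2 := hmem v
    simp only [Nat.dist, Set.mem_Icc] at h1 h2
    omega
  -- the set of labels at distance ≥ m from a
  have hΔT : G.maxDegree ≤
      ((Finset.Icc 1 n).filter (fun j => m ≤ Nat.dist j a)).card := by
    rw [hu, ← G.card_neighborFinset_eq_degree]
    calc (G.neighborFinset u).card = ((G.neighborFinset u).image ψ).card :=
          (Finset.card_image_of_injective _ hinj).symm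
      _ ≤ _ := by
          apply Finset.card_le_card
          intro j hj
          simp only [Finset.mem_image] at hj
          obtain ⟨x, hx, rfl⟩ := hj
          rw [SimpleGraph.mem_neighborFinset] at hx
          have h1 := hmem x
          have h2 := hedge u x hx
          simp only [Set.mem_Icc] at h1
          simp only [Finset.mem_filter, Finset.mem_Icc]
          exact ⟨⟨h1.1, h1.2⟩, by rw [Nat.dist_comm]; exact h2⟩
  -- the set of labels at distance < m from a has at least m elements
  set c := min a (n - m + 1) with hc
  have hsub : Finset.Icc c (c + m - 1) ⊆
      (Finset.Icc 1 n).filter (fun j => ¬ m ≤ Nat.dist j a) := by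
    intro j hj
    simp only [Finset.mem_Icc] at hj
    simp only [Finset.mem_filter, Finset.mem_Icc, Nat.dist, not_le]
    omega
  have hBcard : m ≤
      ((Finset.Icc 1 n).filter (fun j => ¬ m ≤ Nat.dist j a)).card := by
    calc m = (Finset.Icc c (c + m - 1)).card := by rw [Nat.card_Icc]; omega
      _ ≤ _ := Finset.card_le_card hsub
  have hsplit := Finset.card_filter_add_card_filter_not
    (s := Finset.Icc 1 n) (p := fun j => m ≤ Nat.dist j a)
  rw [Nat.card_Icc] at hsplit
  omega
end

section
/- For a connected graph G on n ≥ 2 vertices with minimum degree δ, mc^{nh}_n(G) ≤ ⌊(n − δ + 1)/2⌋. -/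
open SimpleGraph

/-!
If every edge of `G` has label difference at least `m ≥ 1` under a bijective labelling
`ψ : V → {1, …, n}`, look at the vertex `v` with `ψ v = m`. A neighbour `w` satisfies
`|ψ w - m| ≥ m` and `ψ w ≥ 1`, hence `ψ w ≥ 2m`; by injectivity of `ψ`, `v` has at most
`n - 2m + 1` neighbours, so `δ ≤ n - 2m + 1`. The label `m` is indeed used: connectivity
makes `δ` positive, so there is an edge, and its label difference forces `m < n`.
-/

namespace SimpleGraph

variable {V : Type*} [Fintype V] {G : SimpleGraph V} [DecidableRel G.Adj] {ψ : V → ℕ}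

theorem degree_le_of_forall_adj_le_dist {n : ℕ} (hinj : ψ.Injective)
    (hrange : ∀ w, ψ w ∈ Set.Icc 1 n) {v : V}
    (hsep : ∀ w, G.Adj v w → ψ v ≤ Nat.dist (ψ v) (ψ w)) :
    G.degree v ≤ n + 1 - 2 * ψ v := by
  rw [← card_neighborFinset_eq_degree, ← Nat.card_Icc]
  refine Finset.card_le_card_of_injOn ψ (fun w hw => ?_) hinj.injOn
  have hvw := hsep w ((mem_neighborFinset G v w).mp hw)
  have hw := hrange w
  simp only [Set.mem_Icc, Nat.dist] at hw hvw
  simp only [Finset.coe_Icc, Set.mem_Icc]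
  omega

theorem two_mul_le_of_forall_adj_le_dist [Nonempty V] {m : ℕ} (hδ : 0 < G.minDegree)
    (hψ : Set.BijOn ψ Set.univ (Set.Icc 1 (Fintype.card V)))
    (hsep : ∀ u v, G.Adj u v → m ≤ Nat.dist (ψ u) (ψ v)) :
    2 * m ≤ Fintype.card V + 1 - G.minDegree := by
  have hrange (w : V) : ψ w ∈ Set.Icc 1 (Fintype.card V) := hψ.mapsTo (Set.mem_univ w)
  rcases Nat.eq_zero_or_pos m with rfl | hm
  · exact Nat.zero_le _
  obtain ⟨u, w, huw⟩ : ∃ u w, G.Adj u w := by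
    obtain ⟨u, hu⟩ := G.exists_minimal_degree_vertex
    exact ⟨u, (G.degree_pos_iff_exists_adj u).mp (hu ▸ hδ)⟩
  have hmn : m ≤ Fintype.card V := by
    have hdist := hsep u w huw
    have hu := hrange u
    have hw := hrange w
    simp only [Set.mem_Icc, Nat.dist] at hdist hu hw
    omega
  obtain ⟨v, -, rfl⟩ := hψ.surjOn ⟨hm, hmn⟩
  have hdeg := degree_le_of_forall_adj_le_dist (Set.injOn_univ.mp hψ.injOn) hrange (hsep v)
  have hmin := G.minDegree_le_degree v
  omega

end SimpleGraph

theorem stmt_8_general {V : Type*} [Fintype V] (G : SimpleGraph V)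
    [DecidableRel G.Adj] (hconn : G.Connected) (hn : 2 ≤ Fintype.card V) :
    mcNH G ≤ (Fintype.card V - G.minDegree + 1) / 2 := by
  have : Nontrivial V := Fintype.one_lt_card_iff_nontrivial.mp hn
  have hδ : 0 < G.minDegree := hconn.preconnected.minDegree_pos_of_nontrivial
  refine csSup_le' fun m ⟨ψ, hψ, hsep⟩ => ?_
  have := two_mul_le_of_forall_adj_le_dist hδ hψ hsep
  omega

theorem stmt_8 {V : Type*} [Fintype V] [DecidableEq V] (G : SimpleGraph V)
    [DecidableRel G.Adj] (hconn : G.Connected) (hn : 2 ≤ Fintype.card V) :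
    mcNH G ≤ (Fintype.card V - G.minDegree + 1) / 2 :=
  stmt_8_general G hconn hn
end

section
/- For a simple graph G on n vertices with at least one edge, mc^{nh}_n(G) ≥ 2 if and only if the complement graph G^c contains a Hamiltonian path. -/
open SimpleGraph

/-! A bijective labelling `ψ : V → {1,…,n}` is an ordering of the vertices, and every edge of `G`
has label distance at least `2` exactly when consecutive vertices of the ordering are non-adjacent
in `G`, i.e. adjacent in `Gᶜ`. Such labellings are therefore the Hamiltonian paths of `Gᶜ`,
read off in order. -/

section

open Set Function

variable {V : Type*}

lemma bijOn_Icc_iff_exists_equiv [Fintype V] (ψ : V → ℕ) :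
    BijOn ψ univ (Icc 1 (Fintype.card V)) ↔
      ∃ e : V ≃ Fin (Fintype.card V), ∀ v, ψ v = e v + 1 := by
  constructor
  · intro hψ
    have hmem (v : V) : 1 ≤ ψ v ∧ ψ v ≤ Fintype.card V := hψ.mapsTo (mem_univ v)
    let f (v : V) : Fin (Fintype.card V) := ⟨ψ v - 1, by have := hmem v; omega⟩
    have hf : Injective f := by
      intro u v huv
      simp only [f, Fin.mk.injEq] at huv
      have := hmem u
      have := hmem v
      exact hψ.injOn (mem_univ u) (mem_univ v) (by omega)
    refine ⟨Equiv.ofBijective f ((Fintype.bijective_iff_injective_and_card f).2 ⟨hf, by simp⟩),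
      fun v => ?_⟩
    have := hmem v
    simp only [Equiv.ofBijective_apply, f]
    omega
  · rintro ⟨e, he⟩
    obtain rfl : ψ = fun v => (e v : ℕ) + 1 := funext he
    refine ⟨fun v _ => ?_, fun u _ v _ huv => ?_, fun k hk => ?_⟩
    · simp
    · exact e.injective (Fin.ext (by simpa using huv))
    · obtain ⟨hk1, hk2⟩ := hk
      exact ⟨e.symm ⟨k - 1, by omega⟩, mem_univ _, by simp only [Equiv.apply_symm_apply]; omega⟩

namespace SimpleGraph

lemma exists_isHamiltonian_iff_exists_equiv [Fintype V] [Nonempty V] [DecidableEq V]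
    (H : SimpleGraph V) :
    (∃ (u v : V) (p : H.Walk u v), p.IsHamiltonian) ↔
      ∃ e : V ≃ Fin (Fintype.card V), ∀ x y, (e x : ℕ) + 1 = e y → H.Adj x y := by
  constructor
  · rintro ⟨u, v, p, hp⟩
    refine ⟨hp.getVertEquiv.symm.trans (finCongr hp.length_support), fun x y hxy => ?_⟩
    set i := hp.getVertEquiv.symm x
    set j := hp.getVertEquiv.symm y
    have hij : (i : ℕ) + 1 = j := hxy
    have hx : p.getVert i = x := hp.getVertEquiv.apply_symm_apply x
    have hy : p.getVert (i + 1) = y := hij ▸ hp.getVertEquiv.apply_symm_apply y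
    have hi : (i : ℕ) < p.length := by
      have : (j : ℕ) < p.length + 1 := p.length_support ▸ j.isLt
      omega
    exact hx ▸ hy ▸ p.adj_getVert_succ hi
  · rintro ⟨e, he⟩
    have hne : List.ofFn e.symm ≠ [] := by simp [Fintype.card_ne_zero]
    have hchain : (List.ofFn e.symm).IsChain H.Adj :=
      List.isChain_ofFn.2 fun _ _ => he _ _ (by simp)
    refine ⟨_, _, Walk.ofSupport _ hne hchain, fun w => ?_⟩
    rw [Walk.support_ofSupport]
    exact List.count_eq_one_of_mem (List.nodup_ofFn.2 e.symm.injective)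
      (List.mem_ofFn.2 (e.symm.surjective w))

lemma exists_isHamiltonian_iff_exists_labeling [Fintype V] [Nonempty V] [DecidableEq V]
    (H : SimpleGraph V) :
    (∃ (u v : V) (p : H.Walk u v), p.IsHamiltonian) ↔
      ∃ ψ : V → ℕ, BijOn ψ univ (Icc 1 (Fintype.card V)) ∧
        ∀ x y, ψ x + 1 = ψ y → H.Adj x y := by
  rw [exists_isHamiltonian_iff_exists_equiv]
  constructor
  · rintro ⟨e, he⟩
    exact ⟨fun v => e v + 1, (bijOn_Icc_iff_exists_equiv _).2 ⟨e, fun _ => rfl⟩,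
      fun x y hxy => he x y (Nat.add_right_cancel hxy)⟩
  · rintro ⟨ψ, hψ, hadj⟩
    obtain ⟨e, he⟩ := (bijOn_Icc_iff_exists_equiv ψ).1 hψ
    exact ⟨e, fun x y hxy => hadj x y (by rw [he, he]; omega)⟩

lemma forall_adj_two_le_dist_iff (G : SimpleGraph V) {ψ : V → ℕ} (hψ : Injective ψ) :
    (∀ u v, G.Adj u v → 2 ≤ Nat.dist (ψ u) (ψ v)) ↔ ∀ u v, ψ u + 1 = ψ v → Gᶜ.Adj u v := by
  simp only [Nat.dist]
  constructor
  · intro h u v huv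
    refine (compl_adj G u v).2 ⟨fun he => ?_, fun hadj => ?_⟩
    · subst he
      omega
    · have := h u v hadj
      omega
  · intro h u v hadj
    by_contra hlt
    have hne : ψ u ≠ ψ v := hψ.ne (G.ne_of_adj hadj)
    rcases (by omega : ψ u + 1 = ψ v ∨ ψ v + 1 = ψ u) with huv | hvu
    · exact ((compl_adj G u v).1 (h u v huv)).2 hadj
    · exact ((compl_adj G v u).1 (h v u hvu)).2 hadj.symm

lemma lt_mcNH_iff [Fintype V] {G : SimpleGraph V} (hE : G.edgeSet.Nonempty) {k : ℕ} :
    k < mcNH G ↔ ∃ ψ : V → ℕ, BijOn ψ univ (Icc 1 (Fintype.card V)) ∧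
      ∀ u v, G.Adj u v → k < Nat.dist (ψ u) (ψ v) := by
  rw [mcNH, lt_csSup_iff' ⟨Fintype.card V, ?bound⟩]
  · constructor
    · rintro ⟨b, ⟨ψ, hψ, hψG⟩, hkb⟩
      exact ⟨ψ, hψ, fun u v huv => hkb.trans_le (hψG u v huv)⟩
    · rintro ⟨ψ, hψ, hψG⟩
      exact ⟨k + 1, ⟨ψ, hψ, hψG⟩, k.lt_succ_self⟩
  · rintro b ⟨ψ, hψ, hψG⟩
    obtain ⟨e, he⟩ := hE
    induction e using Sym2.ind with | _ x y => ?_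
    have hx := hψ.mapsTo (mem_univ x)
    have hy := hψ.mapsTo (mem_univ y)
    have hxy := hψG x y he
    simp only [mem_Icc, Nat.dist] at hx hy hxy
    omega

end SimpleGraph

end

theorem stmt_10 {V : Type*} [Fintype V] [DecidableEq V] (G : SimpleGraph V)
    (hE : G.edgeSet.Nonempty) :
    2 ≤ mcNH G ↔ ∃ (u v : V) (p : Gᶜ.Walk u v), p.IsHamiltonian := by
  have : Nonempty V := let ⟨e, _⟩ := hE; ⟨e.out.1⟩
  show 1 < mcNH G ↔ _
  rw [lt_mcNH_iff hE, exists_isHamiltonian_iff_exists_labeling]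
  exact exists_congr fun ψ => and_congr_right fun hψ =>
    forall_adj_two_le_dist_iff G (Set.injOn_univ.1 hψ.injOn)
end

section
/- For the path P_n on n ≥ 2 vertices, mc^{nh}_n(P_n) = ⌊n/2⌋. -/
/-!
The label `⌊n/2⌋ + 1` lies within distance `⌊n/2⌋` of every label in `{1, …, n}`, so the vertex
carrying it, together with any of its neighbours, bounds the minimum edge span by `⌊n/2⌋`. On the
path this is attained by the zigzag labeling that puts `1, 2, …` on the odd indices and
`⌊n/2⌋ + 1, ⌊n/2⌋ + 2, …` on the even ones.
-/

open SimpleGraph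

namespace SimpleGraph

variable {V : Type*} [Fintype V]

def IsNoHoleLabeling (ψ : V → ℕ) : Prop :=
  Set.BijOn ψ Set.univ (Set.Icc 1 (Fintype.card V))

theorem isNoHoleLabeling_of_injective {ψ : V → ℕ} (hinj : Function.Injective ψ)
    (hmaps : ∀ v, ψ v ∈ Set.Icc 1 (Fintype.card V)) : IsNoHoleLabeling ψ := by
  refine Set.BijOn.mk (fun v _ => hmaps v) hinj.injOn ?_
  have hsurj := Finset.surjOn_of_injOn_of_card_le ψ (s := Finset.univ)
    (t := Finset.Icc 1 (Fintype.card V)) (fun v _ => by simpa using hmaps v) hinj.injOn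
    (by simp)
  simpa using hsurj

theorem mcNH_eq_of_isNoHoleLabeling {G : SimpleGraph V} {m : ℕ}
    (hex : ∃ ψ : V → ℕ, IsNoHoleLabeling ψ ∧ ∀ u v, G.Adj u v → m ≤ Nat.dist (ψ u) (ψ v))
    (hle : ∀ ψ : V → ℕ, IsNoHoleLabeling ψ → ∃ u v, G.Adj u v ∧ Nat.dist (ψ u) (ψ v) ≤ m) :
    mcNH G = m :=
  IsGreatest.csSup_eq ⟨hex, fun _ ⟨ψ, hψ, hspan⟩ =>
    let ⟨u, v, huv, hdist⟩ := hle ψ hψ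
    (hspan u v huv).trans hdist⟩

theorem IsNoHoleLabeling.exists_adj_dist_le_card_div_two [Nonempty V] {G : SimpleGraph V}
    (hG : ∀ v, ∃ w, G.Adj v w) {ψ : V → ℕ} (hψ : IsNoHoleLabeling ψ) :
    ∃ u v, G.Adj u v ∧ Nat.dist (ψ u) (ψ v) ≤ Fintype.card V / 2 := by
  have hcard : 0 < Fintype.card V := Fintype.card_pos
  obtain ⟨u, -, hu⟩ := hψ.surjOn
    (show Fintype.card V / 2 + 1 ∈ Set.Icc 1 (Fintype.card V) from ⟨by omega, by omega⟩)
  obtain ⟨w, huw⟩ := hG u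
  obtain ⟨hw₁, hw₂⟩ := hψ.mapsTo (Set.mem_univ w)
  exact ⟨u, w, huw, by unfold Nat.dist; omega⟩

theorem pathGraph_exists_adj {n : ℕ} (hn : 2 ≤ n) (v : Fin n) : ∃ w, (pathGraph n).Adj v w :=
  have : Nontrivial (Fin n) := Fin.nontrivial_iff_two_le.mpr hn
  (pathGraph_preconnected n).exists_adj_of_nontrivial v

def zigzagLabeling (n : ℕ) (i : Fin n) : ℕ :=
  if i.val % 2 = 0 then n / 2 + i.val / 2 + 1 else (i.val + 1) / 2

theorem isNoHoleLabeling_zigzagLabeling (n : ℕ) : IsNoHoleLabeling (zigzagLabeling n) := by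
  refine isNoHoleLabeling_of_injective (fun i j hij => Fin.ext ?_) fun i => ?_
  · have := i.isLt
    have := j.isLt
    unfold zigzagLabeling at hij
    split_ifs at hij <;> omega
  · have := i.isLt
    rw [Fintype.card_fin, Set.mem_Icc, zigzagLabeling]
    split_ifs <;> omega

theorem le_dist_zigzagLabeling {n : ℕ} {u v : Fin n} (huv : (pathGraph n).Adj u v) :
    n / 2 ≤ Nat.dist (zigzagLabeling n u) (zigzagLabeling n v) := by
  rw [pathGraph_adj] at huv
  unfold zigzagLabeling Nat.dist
  split_ifs <;> omega

end SimpleGraph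

theorem stmt_13 (n : ℕ) (hn : 2 ≤ n) :
    mcNH (SimpleGraph.pathGraph n) = n / 2 := by
  have : Nonempty (Fin n) := ⟨⟨0, by omega⟩⟩
  refine mcNH_eq_of_isNoHoleLabeling
    ⟨zigzagLabeling n, isNoHoleLabeling_zigzagLabeling n, fun _ _ => le_dist_zigzagLabeling⟩
    fun ψ hψ => ?_
  simpa using hψ.exists_adj_dist_le_card_div_two (pathGraph_exists_adj hn)
end

section
/- Let T be a tree on n ≥ 2 vertices with bipartition (X₁, X₂), |X_i| = q_i. Then mc^{nh}_n(T) ≥ min{q₁, q₂}. -/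
open SimpleGraph

section Helpers
variable {V : Type*} [DecidableEq V]

lemma succ_bijOn (k : ℕ) : Set.BijOn (fun x => x + 1) (Set.Icc 1 k) (Set.Icc 2 (k+1)) := by
  refine ⟨fun x hx => ?_, fun x _ y _ h => ?_, fun m hm => ?_⟩
  · simp only [Set.mem_Icc] at *; omega
  · have h' : x + 1 = y + 1 := h
    omega
  · simp only [Set.mem_Icc] at hm
    exact ⟨m - 1, by simp only [Set.mem_Icc]; omega, show m - 1 + 1 = m by omega⟩

lemma bijOn_top {f : V → ℕ} {s : Finset V} {k : ℕ} {a : V}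
    (ha : a ∉ s) (hf : Set.BijOn f ↑s (Set.Icc 1 k)) :
    Set.BijOn (fun x => if x = a then k + 1 else f x) ↑(insert a s) (Set.Icc 1 (k + 1)) := by
  have h1 : Set.BijOn (fun x => if x = a then k + 1 else f x) ↑s (Set.Icc 1 k) := by
    refine hf.congr fun x hx => ?_
    have hxa : x ≠ a := fun h => ha (h ▸ hx)
    simp [hxa]
  have h2 := h1.insert (a := a) (by simp)
  have h3 : (insert a (↑s : Set V)) = ↑(insert a s) := by simp
  have h4 : insert (k + 1) (Set.Icc 1 k) = Set.Icc 1 (k+1) := by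
    ext m; simp only [Set.mem_insert_iff, Set.mem_Icc]; omega
  rw [h3, if_pos rfl, h4] at h2; exact h2

lemma bijOn_bot {f : V → ℕ} {s : Finset V} {k : ℕ} {a : V}
    (ha : a ∉ s) (hf : Set.BijOn f ↑s (Set.Icc 1 k)) :
    Set.BijOn (fun x => if x = a then 1 else f x + 1) ↑(insert a s) (Set.Icc 1 (k + 1)) := by
  have h1 : Set.BijOn (fun x => if x = a then 1 else f x + 1) ↑s (Set.Icc 2 (k+1)) := by
    refine (((succ_bijOn k).comp hf).congr fun x hx => ?_)
    have hxa : x ≠ a := fun h => ha (h ▸ hx)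
    simp [hxa, Function.comp]
  have h2 := h1.insert (a := a) (by simp)
  have h3 : (insert a (↑s : Set V)) = ↑(insert a s) := by simp
  have h4 : insert 1 (Set.Icc 2 (k+1)) = Set.Icc 1 (k+1) := by
    ext m; simp only [Set.mem_insert_iff, Set.mem_Icc]; omega
  rw [h3, if_pos rfl, h4] at h2; exact h2

end Helpers
section Leaf
variable {V : Type*} [Fintype V] [DecidableEq V] (T : SimpleGraph V) (X₁ X₂ : Finset V)

lemma walk_parity (hdisj : Disjoint X₁ X₂) (hcover : X₁ ∪ X₂ = Finset.univ)
    (hbip : ∀ u v, T.Adj u v → (u ∈ X₁ ↔ v ∈ X₂)) :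
    ∀ {u v : V} (p : T.Walk u v), ((u ∈ X₁) ↔ (v ∈ X₁)) ↔ Even p.length := by
  have hflip : ∀ u v, T.Adj u v → ((u ∈ X₁) ↔ (v ∉ X₁)) := by
    intro u v h
    have h2 := hbip u v h
    have hv : v ∈ X₁ ∨ v ∈ X₂ := by
      have : v ∈ X₁ ∪ X₂ := by rw [hcover]; exact Finset.mem_univ v
      simpa [Finset.mem_union] using this
    have hn : ¬ (v ∈ X₁ ∧ v ∈ X₂) := fun ⟨h1', h2'⟩ => Finset.disjoint_left.mp hdisj h1' h2'
    tauto
  intro u v p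
  induction p with
  | nil => simp
  | cons h q ih =>
    have := hflip _ _ h
    simp only [SimpleGraph.Walk.length_cons, Nat.even_add_one]
    tauto

lemma exists_quasi_leaf (hacyc : T.IsAcyclic) (hconn : T.Connected)
    (hdisj : Disjoint X₁ X₂) (hcover : X₁ ∪ X₂ = Finset.univ)
    (hbip : ∀ u v, T.Adj u v → (u ∈ X₁ ↔ v ∈ X₂))
    (S : Finset V) (hS : S.Nonempty) :
    ∃ v ∈ S, ∀ u₁ u₂, u₁ ∈ S → u₂ ∈ S → T.Adj v u₁ → T.Adj v u₂ → u₁ = u₂ := by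
  classical
  obtain ⟨r, hrS⟩ := hS
  obtain ⟨v, hvS, hmax⟩ := S.exists_max_image (T.dist r) ⟨r, hrS⟩
  -- distance facts
  have dadj : ∀ x y : V, T.Adj x y → T.dist r y ≤ T.dist r x + 1 := by
    intro x y hxy
    obtain ⟨p, hp, hlen⟩ := hconn.exists_path_of_dist r x
    calc T.dist r y ≤ (p.concat hxy).length := SimpleGraph.dist_le _
      _ = T.dist r x + 1 := by rw [SimpleGraph.Walk.length_concat, hlen]
  have dne : ∀ x y : V, T.Adj x y → T.dist r x ≠ T.dist r y := by
    intro x y hxy heq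
    obtain ⟨px, hpx, hlx⟩ := hconn.exists_path_of_dist r x
    obtain ⟨py, hpy, hly⟩ := hconn.exists_path_of_dist r y
    have h1 := walk_parity T X₁ X₂ hdisj hcover hbip px
    have h2 := walk_parity T X₁ X₂ hdisj hcover hbip py
    rw [hlx] at h1; rw [hly] at h2
    have h3 := hbip x y hxy
    have hy : y ∈ X₁ ∨ y ∈ X₂ := by
      have : y ∈ X₁ ∪ X₂ := by rw [hcover]; exact Finset.mem_univ y
      simpa [Finset.mem_union] using this
    have hn : ¬ (y ∈ X₁ ∧ y ∈ X₂) := fun ⟨ha, hb⟩ => Finset.disjoint_left.mp hdisj ha hb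
    rw [heq] at h1
    tauto
  -- every S-neighbor of v is strictly closer to r
  have hclose : ∀ u ∈ S, T.Adj v u → T.dist r u + 1 = T.dist r v := by
    intro u huS hadj
    have h1 := hmax u huS
    have h2 := dadj u v hadj.symm
    have h3 := dne v u hadj
    omega
  refine ⟨v, hvS, fun u₁ u₂ h₁S h₂S ha₁ ha₂ => ?_⟩
  have hd₁ := hclose u₁ h₁S ha₁
  have hd₂ := hclose u₂ h₂S ha₂
  -- build two paths from r to v through u₁ and u₂
  obtain ⟨p₁, hp₁, hl₁⟩ := hconn.exists_path_of_dist r u₁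
  obtain ⟨p₂, hp₂, hl₂⟩ := hconn.exists_path_of_dist r u₂
  have hnv₁ : v ∉ p₁.support := by
    intro hmem
    have := SimpleGraph.Walk.length_takeUntil_le p₁ hmem
    have := SimpleGraph.dist_le (p₁.takeUntil v hmem)
    omega
  have hnv₂ : v ∉ p₂.support := by
    intro hmem
    have := SimpleGraph.Walk.length_takeUntil_le p₂ hmem
    have := SimpleGraph.dist_le (p₂.takeUntil v hmem)
    omega
  have hcpath : ∀ (w : V) (p : T.Walk r w) (hp : p.IsPath) (ha : T.Adj w v),
      v ∉ p.support → (p.concat ha).IsPath := by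
    intro w p hp ha hnv
    rw [← SimpleGraph.Walk.isPath_reverse_iff, SimpleGraph.Walk.reverse_concat]
    exact hp.reverse.cons (by
      rw [SimpleGraph.Walk.support_reverse]; simpa using hnv)
  have hq₁ : (p₁.concat ha₁.symm).IsPath := hcpath _ p₁ hp₁ _ hnv₁
  have hq₂ : (p₂.concat ha₂.symm).IsPath := hcpath _ p₂ hp₂ _ hnv₂
  have huniq := SimpleGraph.isAcyclic_iff_path_unique.mp hacyc
    (⟨p₁.concat ha₁.symm, hq₁⟩ : T.Path r v) ⟨p₂.concat ha₂.symm, hq₂⟩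
  have heq : (p₁.concat ha₁.symm) = (p₂.concat ha₂.symm) := congrArg Subtype.val huniq
  have := congrArg (fun w : T.Walk r v => w.reverse.getVert 1) heq
  simpa [SimpleGraph.Walk.reverse_concat,
    SimpleGraph.Walk.getVert_cons _ _ one_ne_zero] using this

end Leaf
section Key
variable {V : Type*} [Fintype V] [DecidableEq V]

lemma key (T : SimpleGraph V) (hacyc : T.IsAcyclic) (hconn : T.Connected)
    (X Y : Finset V) (hdisj : Disjoint X Y) (hcover : X ∪ Y = Finset.univ)
    (hbip : ∀ u v, T.Adj u v → (u ∈ X ↔ v ∈ Y)) :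
    ∀ (N : ℕ) (A B : Finset V), A.card + B.card = N → A ⊆ X → B ⊆ Y → A.card ≤ B.card →
    ∃ α β : V → ℕ, Set.BijOn α ↑A (Set.Icc 1 A.card) ∧ Set.BijOn β ↑B (Set.Icc 1 B.card) ∧
      ∀ u ∈ A, ∀ w ∈ B, T.Adj u w → α u ≤ β w := by
  intro N
  induction N using Nat.strong_induction_on with
  | _ N ih =>
    intro A B hN hAX hBY hab
    have hIcc0 : Set.Icc 1 (0:ℕ) = (∅ : Set ℕ) := Set.Icc_eq_empty (by norm_num)
    rcases Finset.eq_empty_or_nonempty B with rfl | hBne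
    · have hA : A = ∅ := Finset.card_eq_zero.mp (le_antisymm (by simpa using hab) (Nat.zero_le _))
      subst hA
      refine ⟨fun _ => 0, fun _ => 0, ?_, ?_, by simp⟩ <;>
        · simp only [Finset.card_empty, hIcc0, Finset.coe_empty]
          exact Set.bijOn_empty _
    rcases Finset.eq_empty_or_nonempty A with rfl | hAne
    · obtain ⟨w, hw⟩ := hBne
      have hBpos : 1 ≤ B.card := Finset.card_pos.mpr ⟨w, hw⟩
      have hkB : (B.erase w).card + 1 = B.card := by
        rw [Finset.card_erase_of_mem hw]; omega
      have hNpos : 1 ≤ N := by simp at hN; omega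
      obtain ⟨α', β', hα', hβ', -⟩ := ih (N - 1) (by omega) ∅ (B.erase w)
        (by simp at hN ⊢; omega) (by simp) ((Finset.erase_subset _ _).trans hBY) (by simp)
      refine ⟨α', fun y => if y = w then B.card else β' y, by simpa using hα', ?_,
        fun u hu => absurd hu (Finset.notMem_empty u)⟩
      have hb := bijOn_top (Finset.notMem_erase w B) hβ'
      rw [hkB, Finset.insert_erase hw] at hb
      exact hb
    · have hApos : 1 ≤ A.card := Finset.card_pos.mpr hAne
      have hBpos : 1 ≤ B.card := Finset.card_pos.mpr hBne
      obtain ⟨a0, ha0⟩ := hAne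
      obtain ⟨v, hvS, hquasi⟩ := exists_quasi_leaf T X Y hacyc hconn hdisj hcover hbip (A ∪ B)
        ⟨a0, Finset.mem_union_left _ ha0⟩
      rcases Finset.mem_union.mp hvS with hvA | hvB
      · -- v ∈ A : all its B-neighbors coincide; put v on top of A, w on top of B
        have hBw : ∃ w ∈ B, ∀ y ∈ B, T.Adj v y → y = w := by
          by_cases hex : ∃ y ∈ B, T.Adj v y
          · obtain ⟨w, hwB, hwadj⟩ := hex
            exact ⟨w, hwB, fun y hy hadj => hquasi y w (Finset.mem_union_right _ hy)
              (Finset.mem_union_right _ hwB) hadj hwadj⟩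
          · obtain ⟨w, hwB⟩ := hBne
            exact ⟨w, hwB, fun y hy hadj => absurd ⟨y, hy, hadj⟩ hex⟩
        obtain ⟨w, hwB, hwuniq⟩ := hBw
        have hkA : (A.erase v).card + 1 = A.card := by
          rw [Finset.card_erase_of_mem hvA]; omega
        have hkB : (B.erase w).card + 1 = B.card := by
          rw [Finset.card_erase_of_mem hwB]; omega
        obtain ⟨α', β', hα', hβ', hcon'⟩ := ih (N - 2) (by omega) (A.erase v) (B.erase w)
          (by omega) ((Finset.erase_subset _ _).trans hAX)
          ((Finset.erase_subset _ _).trans hBY) (by omega)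
        refine ⟨fun x => if x = v then A.card else α' x,
          fun y => if y = w then B.card else β' y, ?_, ?_, ?_⟩
        · have hb := bijOn_top (Finset.notMem_erase v A) hα'
          rw [hkA, Finset.insert_erase hvA] at hb
          exact hb
        · have hb := bijOn_top (Finset.notMem_erase w B) hβ'
          rw [hkB, Finset.insert_erase hwB] at hb
          exact hb
        · intro u hu w' hw' hadj
          by_cases huv : u = v <;> by_cases hww : w' = w
          · simp only [if_pos huv, if_pos hww]; exact hab
          · exact absurd (hwuniq w' hw' (huv ▸ hadj)) hww
          · have huA : u ∈ A.erase v := Finset.mem_erase.mpr ⟨huv, hu⟩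
            have := hα'.mapsTo huA
            simp only [Set.mem_Icc] at this
            simp only [if_neg huv, if_pos hww]
            omega
          · have huA : u ∈ A.erase v := Finset.mem_erase.mpr ⟨huv, hu⟩
            have hwB' : w' ∈ B.erase w := Finset.mem_erase.mpr ⟨hww, hw'⟩
            simp only [if_neg huv, if_neg hww]
            exact hcon' u huA w' hwB' hadj
      · -- v ∈ B : all its A-neighbors coincide; put u, v at the bottom
        have hAu : ∃ u ∈ A, ∀ x ∈ A, T.Adj x v → x = u := by
          by_cases hex : ∃ x ∈ A, T.Adj x v
          · obtain ⟨u, huA, huadj⟩ := hex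
            exact ⟨u, huA, fun x hx hadj => hquasi x u (Finset.mem_union_left _ hx)
              (Finset.mem_union_left _ huA) hadj.symm huadj.symm⟩
          · exact ⟨a0, ha0, fun x hx hadj => absurd ⟨x, hx, hadj⟩ hex⟩
        obtain ⟨u, huA, huuniq⟩ := hAu
        have hkA : (A.erase u).card + 1 = A.card := by
          rw [Finset.card_erase_of_mem huA]; omega
        have hkB : (B.erase v).card + 1 = B.card := by
          rw [Finset.card_erase_of_mem hvB]; omega
        obtain ⟨α', β', hα', hβ', hcon'⟩ := ih (N - 2) (by omega) (A.erase u) (B.erase v)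
          (by omega) ((Finset.erase_subset _ _).trans hAX)
          ((Finset.erase_subset _ _).trans hBY) (by omega)
        refine ⟨fun x => if x = u then 1 else α' x + 1,
          fun y => if y = v then 1 else β' y + 1, ?_, ?_, ?_⟩
        · have hb := bijOn_bot (Finset.notMem_erase u A) hα'
          rw [hkA, Finset.insert_erase huA] at hb
          exact hb
        · have hb := bijOn_bot (Finset.notMem_erase v B) hβ'
          rw [hkB, Finset.insert_erase hvB] at hb
          exact hb
        · intro x hx y hy hadj
          by_cases hxu : x = u <;> by_cases hyv : y = v
          · simp [if_pos hxu, if_pos hyv]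
          · simp only [if_pos hxu, if_neg hyv]; omega
          · exact absurd (huuniq x hx (hyv ▸ hadj)) hxu
          · have hxA : x ∈ A.erase u := Finset.mem_erase.mpr ⟨hxu, hx⟩
            have hyB : y ∈ B.erase v := Finset.mem_erase.mpr ⟨hyv, hy⟩
            simp only [if_neg hxu, if_neg hyv]
            have := hcon' x hxA y hyB hadj
            omega

end Key
section Main
variable {V : Type*} [Fintype V] [DecidableEq V]

lemma main_aux (T : SimpleGraph V) (hT : T.IsTree) (X Y : Finset V)
    (hdisj : Disjoint X Y) (hcover : X ∪ Y = Finset.univ)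
    (hbip : ∀ u v, T.Adj u v → (u ∈ X ↔ v ∈ Y)) (hXY : X.card ≤ Y.card) :
    ∃ ψ : V → ℕ, Set.BijOn ψ Set.univ (Set.Icc 1 (Fintype.card V)) ∧
      ∀ u v, T.Adj u v → X.card ≤ Nat.dist (ψ u) (ψ v) := by
  classical
  obtain ⟨α, β, hα, hβ, hcon⟩ := key T hT.2 hT.1 X Y hdisj hcover hbip
    (X.card + Y.card) X Y rfl (subset_refl _) (subset_refl _) hXY
  have hcard : X.card + Y.card = Fintype.card V := by
    rw [← Finset.card_union_of_disjoint hdisj, hcover, Finset.card_univ]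
  have hmemY : ∀ x : V, x ∉ X → x ∈ Y := by
    intro x hx
    have : x ∈ X ∪ Y := by rw [hcover]; exact Finset.mem_univ x
    rcases Finset.mem_union.mp this with h | h
    · exact absurd h hx
    · exact h
  refine ⟨fun x => if x ∈ X then α x else X.card + β x, ⟨?_, ?_, ?_⟩, ?_⟩
  · intro x _
    by_cases hx : x ∈ X
    · have := hα.mapsTo hx
      simp only [Set.mem_Icc] at this ⊢
      simp only [if_pos hx]
      omega
    · have := hβ.mapsTo (hmemY x hx)
      simp only [Set.mem_Icc] at this ⊢
      simp only [if_neg hx]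
      omega
  · intro x _ y _ hxy
    simp only at hxy
    by_cases hx : x ∈ X <;> by_cases hy : y ∈ X
    · rw [if_pos hx, if_pos hy] at hxy
      exact hα.injOn hx hy hxy
    · exfalso
      rw [if_pos hx, if_neg hy] at hxy
      have h1 := hα.mapsTo hx
      have h2 := hβ.mapsTo (hmemY y hy)
      simp only [Set.mem_Icc] at h1 h2
      omega
    · exfalso
      rw [if_neg hx, if_pos hy] at hxy
      have h1 := hα.mapsTo hy
      have h2 := hβ.mapsTo (hmemY x hx)
      simp only [Set.mem_Icc] at h1 h2
      omega
    · rw [if_neg hx, if_neg hy] at hxy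
      exact hβ.injOn (hmemY x hx) (hmemY y hy) (by omega)
  · intro m hm
    simp only [Set.mem_Icc] at hm
    rw [← hcard] at hm
    by_cases hmX : m ≤ X.card
    · obtain ⟨x, hxX, hαx⟩ := hα.surjOn (Set.mem_Icc.mpr ⟨hm.1, hmX⟩)
      exact ⟨x, Set.mem_univ x, by show (if x ∈ X then α x else X.card + β x) = m; rw [if_pos (Finset.mem_coe.mp hxX)]; exact hαx⟩
    · obtain ⟨y, hyY, hβy⟩ := hβ.surjOn (Set.mem_Icc.mpr (⟨by omega, by omega⟩ :
        1 ≤ m - X.card ∧ m - X.card ≤ Y.card))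
      have hyX : y ∉ X := fun h => Finset.disjoint_left.mp hdisj h (Finset.mem_coe.mp hyY)
      exact ⟨y, Set.mem_univ y, by show (if y ∈ X then α y else X.card + β y) = m; rw [if_neg hyX]; omega⟩
  · intro u v hadj
    by_cases hu : u ∈ X
    · have hv : v ∈ Y := (hbip u v hadj).mp hu
      have hvX : v ∉ X := fun h => Finset.disjoint_left.mp hdisj h hv
      have h1 := hcon u hu v hv hadj
      have h2 := hα.mapsTo hu
      simp only [Set.mem_Icc] at h2
      simp only [if_pos hu, if_neg hvX]
      rw [Nat.dist_eq_sub_of_le (by omega : α u ≤ X.card + β v)]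
      omega
    · have hu' : u ∈ Y := hmemY u hu
      have hv : v ∈ X := (hbip v u hadj.symm).mpr hu'
      have h1 := hcon v hv u hu' hadj.symm
      have h2 := hα.mapsTo hv
      simp only [Set.mem_Icc] at h2
      simp only [if_neg hu, if_pos hv]
      rw [Nat.dist_comm, Nat.dist_eq_sub_of_le (by omega : α v ≤ X.card + β u)]
      omega

end Main

theorem stmt_15 {V : Type*} [Fintype V] [DecidableEq V] (T : SimpleGraph V)
    (hT : T.IsTree) (hn : 2 ≤ Fintype.card V) (X₁ X₂ : Finset V)
    (hdisj : Disjoint X₁ X₂) (hcover : X₁ ∪ X₂ = Finset.univ)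
    (hbip : ∀ u v, T.Adj u v → (u ∈ X₁ ↔ v ∈ X₂)) :
    min X₁.card X₂.card ≤ mcNH T := by
  classical
  have hbip' : ∀ u v, T.Adj u v → (u ∈ X₂ ↔ v ∈ X₁) := fun u v h => (hbip v u h.symm).symm
  have hadj : ∃ x y : V, T.Adj x y := by
    obtain ⟨a, b, hne⟩ := Fintype.exists_pair_of_one_lt_card (show 1 < Fintype.card V by omega)
    obtain ⟨p⟩ := hT.1 a b
    cases p with
    | nil => exact absurd rfl hne
    | cons h q => exact ⟨_, _, h⟩
  obtain ⟨x, y, hxy⟩ := hadj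
  have hbdd : BddAbove {m | ∃ ψ : V → ℕ,
      Set.BijOn ψ Set.univ (Set.Icc 1 (Fintype.card V)) ∧
      ∀ u v, T.Adj u v → m ≤ Nat.dist (ψ u) (ψ v)} := by
    refine ⟨Fintype.card V, fun m hm => ?_⟩
    obtain ⟨ψ, hψ, hedge⟩ := hm
    have hmle := hedge x y hxy
    have h1 := hψ.mapsTo (Set.mem_univ x)
    have h2 := hψ.mapsTo (Set.mem_univ y)
    simp only [Set.mem_Icc] at h1 h2
    have hd : Nat.dist (ψ x) (ψ y) = (ψ x - ψ y) + (ψ y - ψ x) := rfl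
    omega
  rw [mcNH]
  rcases le_total X₁.card X₂.card with hle | hle
  · obtain ⟨ψ, hψ, hedge⟩ := main_aux T hT X₁ X₂ hdisj hcover hbip hle
    rw [min_eq_left hle]
    exact le_csSup hbdd ⟨ψ, hψ, hedge⟩
  · obtain ⟨ψ, hψ, hedge⟩ := main_aux T hT X₂ X₁ hdisj.symm
      (by rw [Finset.union_comm]; exact hcover) hbip' hle
    rw [min_eq_right hle]
    exact le_csSup hbdd ⟨ψ, hψ, hedge⟩
end

section
/- Let T_n be the tree obtained from the star K_{1,q₂} by attaching q₁ − 1 new pendant vertices to one fixed leaf of the star, where 1 ≤ q₁ ≤ q₂ and n = q₁ + q₂. Then mc^{nh}_n(T_n) = q₁. -/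
open SimpleGraph

/-- The tree obtained from the star `K_{1,q₂}` (center `inl 0`, leaves `inr j`)
by attaching `q₁ − 1` pendant vertices (`inl i`, `i ≠ 0`) to the leaf `inr 0`. -/
def doubleStar (q₁ q₂ : ℕ) : SimpleGraph (Fin q₁ ⊕ Fin q₂) :=
  SimpleGraph.fromRel (fun x y => match x, y with
    | .inl a, .inr b => a.val = 0 ∨ b.val = 0
    | _, _ => False)

theorem stmt_16 (q₁ q₂ : ℕ) (h1 : 1 ≤ q₁) (h12 : q₁ ≤ q₂) :
    mcNH (doubleStar q₁ q₂) = q₁ := by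
  have hq2 : 1 ≤ q₂ := le_trans h1 h12
  have hcard : Fintype.card (Fin q₁ ⊕ Fin q₂) = q₁ + q₂ := by simp
  have hadjlr : ∀ (a : Fin q₁) (b : Fin q₂),
      (doubleStar q₁ q₂).Adj (.inl a) (.inr b) ↔ (a.val = 0 ∨ b.val = 0) := by
    intro a b; simp [doubleStar, SimpleGraph.fromRel_adj]
  -- the set
  set S := {m | ∃ ψ : Fin q₁ ⊕ Fin q₂ → ℕ,
      Set.BijOn ψ Set.univ (Set.Icc 1 (Fintype.card (Fin q₁ ⊕ Fin q₂))) ∧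
      ∀ u v, (doubleStar q₁ q₂).Adj u v → m ≤ Nat.dist (ψ u) (ψ v)} with hS
  -- upper bound
  have hub : ∀ m ∈ S, m ≤ q₁ := by
    rintro m ⟨ψ, hbij, hedge⟩
    by_contra hm
    push_neg at hm
    set c := ψ (Sum.inl ⟨0, h1⟩) with hc
    have hcmem : c ∈ Set.Icc 1 (q₁ + q₂) := by
      have := hbij.1 (Set.mem_univ (Sum.inl ⟨0, h1⟩)); rwa [hcard] at this
    obtain ⟨hc1, hc2⟩ := hcmem
    -- any label within q₁ of c comes from an inl vertex
    have key : ∀ x, 1 ≤ x → x ≤ q₁ + q₂ → Nat.dist c x ≤ q₁ →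
        ∃ i : Fin q₁, ψ (Sum.inl i) = x := by
      intro x hx1 hx2 hxd
      have hxmem : x ∈ Set.Icc 1 (Fintype.card (Fin q₁ ⊕ Fin q₂)) := by
        rw [hcard]; exact ⟨hx1, hx2⟩
      obtain ⟨v, -, hv⟩ := hbij.2.2 hxmem
      cases v with
      | inl i => exact ⟨i, hv⟩
      | inr b =>
        exfalso
        have hadj : (doubleStar q₁ q₂).Adj (.inl ⟨0, h1⟩) (.inr b) :=
          (hadjlr _ _).mpr (Or.inl rfl)
        have := hedge _ _ hadj
        rw [hv, ← hc] at this
        omega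
    -- choose interval of q₁+1 labels near c
    obtain ⟨lo, hlo1, hlo2, hlod⟩ :
        ∃ lo, 1 ≤ lo ∧ lo + q₁ ≤ q₁ + q₂ ∧ ∀ x ∈ Finset.Icc lo (lo + q₁), Nat.dist c x ≤ q₁ := by
      by_cases h : c + q₁ ≤ q₁ + q₂
      · exact ⟨c, hc1, h, by intro x hx; simp [Finset.mem_Icc, Nat.dist] at *; omega⟩
      · refine ⟨c - q₁, by omega, by omega, ?_⟩
        intro x hx; simp [Finset.mem_Icc, Nat.dist] at *; omega
    -- pigeonhole
    set g : ℕ → Fin q₁ := fun x =>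
      if h : ∃ i : Fin q₁, ψ (Sum.inl i) = x then h.choose else ⟨0, h1⟩ with hg
    have hgspec : ∀ x ∈ Finset.Icc lo (lo + q₁), ψ (Sum.inl (g x)) = x := by
      intro x hx
      rw [Finset.mem_Icc] at hx
      have hex := key x (by omega) (by omega) (hlod x (by rw [Finset.mem_Icc]; omega))
      simp only [hg, dif_pos hex]
      exact hex.choose_spec
    have hinj : Set.InjOn g (Finset.Icc lo (lo + q₁)) := by
      intro x hx y hy hxy
      have := hgspec x hx
      rw [hxy, hgspec y hy] at this
      exact this.symm
    have hle := Finset.card_le_card_of_injOn g (fun x _ => Finset.mem_univ (g x)) hinj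
    rw [Nat.card_Icc] at hle
    simp [Finset.card_univ] at hle
    omega
  -- membership
  have hmem : q₁ ∈ S := by
    refine ⟨fun v => match v with
      | .inl a => a.val + 1
      | .inr b => if b.val = 0 then q₁ + q₂ else q₁ + b.val, ?_, ?_⟩
    · rw [hcard]
      refine ⟨?_, ?_, ?_⟩
      · rintro (a | b) -
        · simp only [Set.mem_Icc]; have := a.isLt; omega
        · simp only [Set.mem_Icc]; split <;> (have := b.isLt; omega)
      · rintro (a | b) - (a' | b') - h
        · simp only at h; exact congrArg Sum.inl (Fin.ext (by omega))
        · have := a.isLt; have := b'.isLt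
          simp only at h; split at h <;> omega
        · have := a'.isLt; have := b.isLt
          simp only at h; split at h <;> omega
        · have := b.isLt; have := b'.isLt
          simp only at h
          split at h <;> split at h <;>
            exact congrArg Sum.inr (Fin.ext (by omega))
      · intro x hx
        simp only [Set.mem_Icc] at hx
        by_cases hxq : x ≤ q₁
        · exact ⟨Sum.inl ⟨x - 1, by omega⟩, Set.mem_univ _, by simp; omega⟩
        · by_cases hxn : x = q₁ + q₂
          · exact ⟨Sum.inr ⟨0, hq2⟩, Set.mem_univ _, by simp; omega⟩
          · refine ⟨Sum.inr ⟨x - q₁, by omega⟩, Set.mem_univ _, ?_⟩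
            simp only
            rw [if_neg (by omega)]
            omega
    · rintro (a | b) (a' | b') hadj
      · exact absurd hadj (by simp [doubleStar, SimpleGraph.fromRel_adj])
      · have hh := (hadjlr _ _).mp hadj
        have := a.isLt; have := b'.isLt
        rcases hh with h | h <;> (simp only [Nat.dist]; split <;> omega)
      · have hh := (hadjlr _ _).mp hadj.symm
        have := a'.isLt; have := b.isLt
        rcases hh with h | h <;> (simp only [Nat.dist]; split <;> omega)
      · exact absurd hadj (by simp [doubleStar, SimpleGraph.fromRel_adj])
  exact le_antisymm (csSup_le ⟨q₁, hmem⟩ hub) (le_csSup ⟨q₁, hub⟩ hmem)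
end

section
/- For the 2-dimensional grid graph P_m × P_n (the Cartesian product of paths on m and n vertices) with m ≤ n and mn ≥ 2, mc^{nh}_{mn}(P_m × P_n) ≥ ⌊(mn − m)/2⌋. -/
open SimpleGraph

/-- labeling for odd `m`: column-major position parity split. -/
def psiOdd (m n : ℕ) (v : Fin m × Fin n) : ℕ :=
  if (v.2.val * m + v.1.val) % 2 = 0 then (v.2.val * m + v.1.val) / 2 + 1
  else (m * n + 1) / 2 + (v.2.val * m + v.1.val + 1) / 2

/-- labeling for even `m`: diagonal parity split, column-major within each class. -/
def psiEven (m n : ℕ) (v : Fin m × Fin n) : ℕ :=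
  if (v.1.val + v.2.val) % 2 = 0
  then v.2.val * (m / 2) + (v.1.val + 2 - v.2.val % 2) / 2
  else n * (m / 2) + v.2.val * (m / 2) + (v.1.val + 1 + v.2.val % 2) / 2

lemma col_inj {h j j' a a' : ℕ} (ha : 1 ≤ a) (ha2 : a ≤ h) (hb : 1 ≤ a') (hb2 : a' ≤ h)
    (heq : j * h + a = j' * h + a') : j = j' ∧ a = a' := by
  rcases Nat.lt_trichotomy j j' with hj | hj | hj
  · have h1 : (j + 1) * h ≤ j' * h := Nat.mul_le_mul_right h hj
    have h2 : (j + 1) * h = j * h + h := by ring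
    omega
  · subst hj; omega
  · have h1 : (j' + 1) * h ≤ j * h := Nat.mul_le_mul_right h hj
    have h2 : (j' + 1) * h = j' * h + h := by ring
    omega

lemma pos_lt {m n i j : ℕ} (hi : i < m) (hj : j < n) : j * m + i + 1 ≤ m * n := by
  have h1 : (j + 1) * m ≤ n * m := Nat.mul_le_mul_right m hj
  have h2 : (j + 1) * m = j * m + m := by ring
  have h3 : n * m = m * n := by ring
  omega

lemma bijOn_helper {V : Type*} [Fintype V] (ψ : V → ℕ) (N : ℕ) (hcard : Fintype.card V = N)
    (hinj : Function.Injective ψ) (hmaps : ∀ v, 1 ≤ ψ v ∧ ψ v ≤ N) :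
    Set.BijOn ψ Set.univ (Set.Icc 1 N) := by
  have hmt : Set.MapsTo ψ Set.univ (Set.Icc 1 N) := fun v _ => ⟨(hmaps v).1, (hmaps v).2⟩
  refine ⟨hmt, hinj.injOn, ?_⟩
  have hsub : ψ '' Set.univ ⊆ Set.Icc 1 N := Set.image_subset_iff.mpr hmt
  have heq : ψ '' Set.univ = Set.Icc 1 N := by
    apply Set.eq_of_subset_of_ncard_le hsub _ (Set.finite_Icc _ _)
    have h1 : (ψ '' Set.univ).ncard = N := by
      rw [Set.ncard_image_of_injective _ hinj, Set.ncard_univ, Nat.card_eq_fintype_card, hcard]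
    have h2 : (Set.Icc 1 N).ncard = N := by
      rw [← Finset.coe_Icc, Set.ncard_coe_finset, Nat.card_Icc]
      omega
    omega
  rw [Set.SurjOn, heq]

lemma le_mcNH_of {V : Type*} [Fintype V] {G : SimpleGraph V} {D : ℕ} {u0 v0 : V}
    (h0 : G.Adj u0 v0) (ψ : V → ℕ)
    (hbij : Set.BijOn ψ Set.univ (Set.Icc 1 (Fintype.card V)))
    (hedge : ∀ u v, G.Adj u v → D ≤ Nat.dist (ψ u) (ψ v)) : D ≤ mcNH G := by
  apply le_csSup
  · refine ⟨Fintype.card V, ?_⟩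
    rintro d ⟨φ, hφ, hφe⟩
    have h1 := hφ.mapsTo (Set.mem_univ u0)
    have h2 := hφ.mapsTo (Set.mem_univ v0)
    simp only [Set.mem_Icc] at h1 h2
    have h3 := hφe _ _ h0
    have hd : Nat.dist (φ u0) (φ v0) = φ u0 - φ v0 + (φ v0 - φ u0) := rfl
    omega
  · exact ⟨ψ, hbij, hedge⟩

theorem stmt_17 (m n : ℕ) (hm : 1 ≤ m) (hmn : m ≤ n) (h2 : 2 ≤ m * n) :
    (m * n - m) / 2 ≤ mcNH (SimpleGraph.pathGraph m □ SimpleGraph.pathGraph n) := by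
  have hn2 : 2 ≤ n := by
    by_contra hc
    push_neg at hc
    interval_cases n <;> omega
  have hcard : Fintype.card (Fin m × Fin n) = m * n := by simp
  have hadj0 : (pathGraph m □ pathGraph n).Adj (⟨0, hm⟩, ⟨0, by omega⟩) (⟨0, hm⟩, ⟨1, by omega⟩) := by
    rw [SimpleGraph.boxProd_adj]
    right
    refine ⟨?_, rfl⟩
    rw [SimpleGraph.pathGraph_adj]
    left; rfl
  have hdist : ∀ a b : ℕ, Nat.dist a b = a - b + (b - a) := fun a b => rfl
  rcases Nat.even_or_odd m with hme | hmo
  · -- m even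
    have hm2 : m % 2 = 0 := Nat.even_iff.mp hme
    have hNN : m * n = 2 * (n * (m / 2)) := by
      have hh : m = 2 * (m / 2) := by omega
      calc m * n = (2 * (m / 2)) * n := by rw [← hh]
        _ = 2 * (n * (m / 2)) := by ring
    have hinj : Function.Injective (psiEven m n) := by
      intro u v huv
      obtain ⟨ui, uj⟩ := u
      obtain ⟨vi, vj⟩ := v
      unfold psiEven at huv
      dsimp only at huv
      have hiu := ui.isLt
      have hiv := vi.isLt
      have e1 : (uj.val + 1) * (m / 2) = uj.val * (m / 2) + m / 2 := by ring
      have e2 : (vj.val + 1) * (m / 2) = vj.val * (m / 2) + m / 2 := by ring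
      have l1 : (uj.val + 1) * (m / 2) ≤ n * (m / 2) := Nat.mul_le_mul_right _ uj.isLt
      have l2 : (vj.val + 1) * (m / 2) ≤ n * (m / 2) := Nat.mul_le_mul_right _ vj.isLt
      simp only [Prod.mk.injEq, Fin.ext_iff]
      split_ifs at huv with hA hB hB
      · obtain ⟨hj, ha⟩ := col_inj (h := m / 2)
          (by omega) (by omega) (by omega) (by omega) huv
        exact ⟨by omega, hj⟩
      · exfalso; omega
      · exfalso; omega
      · have huv' : uj.val * (m / 2) + (ui.val + 1 + uj.val % 2) / 2
            = vj.val * (m / 2) + (vi.val + 1 + vj.val % 2) / 2 := by omega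
        obtain ⟨hj, ha⟩ := col_inj (h := m / 2)
          (by omega) (by omega) (by omega) (by omega) huv'
        exact ⟨by omega, hj⟩
    have hmaps : ∀ v, 1 ≤ psiEven m n v ∧ psiEven m n v ≤ m * n := by
      intro v
      obtain ⟨vi, vj⟩ := v
      unfold psiEven
      dsimp only
      have hiv := vi.isLt
      have e2 : (vj.val + 1) * (m / 2) = vj.val * (m / 2) + m / 2 := by ring
      have l2 : (vj.val + 1) * (m / 2) ≤ n * (m / 2) := Nat.mul_le_mul_right _ vj.isLt
      split_ifs <;> omega
    have hedge : ∀ u v, (pathGraph m □ pathGraph n).Adj u v →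
        (m * n - m) / 2 ≤ Nat.dist (psiEven m n u) (psiEven m n v) := by
      intro u v hadj
      rw [SimpleGraph.boxProd_adj] at hadj
      obtain ⟨ui, uj⟩ := u
      obtain ⟨vi, vj⟩ := v
      dsimp only at hadj
      unfold psiEven
      dsimp only
      rw [hdist]
      have hiu := ui.isLt
      have hiv := vi.isLt
      rcases hadj with ⟨h1, h2⟩ | ⟨h1, h2⟩
      · rw [SimpleGraph.pathGraph_adj] at h1
        subst h2
        split_ifs <;> omega
      · rw [SimpleGraph.pathGraph_adj] at h1
        subst h2
        rcases h1 with h1 | h1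
        · have hmul : vj.val * (m / 2) = uj.val * (m / 2) + m / 2 := by rw [← h1]; ring
          have hpar : vj.val = uj.val + 1 := h1.symm
          split_ifs <;> omega
        · have hmul : uj.val * (m / 2) = vj.val * (m / 2) + m / 2 := by rw [← h1]; ring
          have hpar : uj.val = vj.val + 1 := h1.symm
          split_ifs <;> omega
    have hbij := bijOn_helper (psiEven m n) (m * n) hcard hinj hmaps
    exact le_mcNH_of hadj0 _ (by rw [hcard]; exact hbij) hedge
  · -- m odd
    have hm2 : m % 2 = 1 := Nat.odd_iff.mp hmo
    have hinj : Function.Injective (psiOdd m n) := by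
      intro u v huv
      obtain ⟨ui, uj⟩ := u
      obtain ⟨vi, vj⟩ := v
      unfold psiOdd at huv
      dsimp only at huv
      have hpu := pos_lt ui.isLt uj.isLt
      have hpv := pos_lt vi.isLt vj.isLt
      have hp : uj.val * m + ui.val = vj.val * m + vi.val := by
        split_ifs at huv <;> omega
      have hp' : uj.val * m + (ui.val + 1) = vj.val * m + (vi.val + 1) := by omega
      obtain ⟨hj, hi⟩ := col_inj (h := m) (by omega) (by omega) (by omega) (by omega) hp'
      simp only [Prod.mk.injEq, Fin.ext_iff]
      exact ⟨by omega, hj⟩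
    have hmaps : ∀ v, 1 ≤ psiOdd m n v ∧ psiOdd m n v ≤ m * n := by
      intro v
      obtain ⟨vi, vj⟩ := v
      unfold psiOdd
      dsimp only
      have hpv := pos_lt vi.isLt vj.isLt
      split_ifs <;> omega
    have hedge : ∀ u v, (pathGraph m □ pathGraph n).Adj u v →
        (m * n - m) / 2 ≤ Nat.dist (psiOdd m n u) (psiOdd m n v) := by
      intro u v hadj
      rw [SimpleGraph.boxProd_adj] at hadj
      obtain ⟨ui, uj⟩ := u
      obtain ⟨vi, vj⟩ := v
      dsimp only at hadj
      unfold psiOdd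
      dsimp only
      rw [hdist]
      have hiu := ui.isLt
      have hiv := vi.isLt
      rcases hadj with ⟨h1, h2⟩ | ⟨h1, h2⟩
      · rw [SimpleGraph.pathGraph_adj] at h1
        subst h2
        split_ifs <;> omega
      · rw [SimpleGraph.pathGraph_adj] at h1
        subst h2
        rcases h1 with h1 | h1
        · have hmul : vj.val * m = uj.val * m + m := by rw [← h1]; ring
          split_ifs <;> omega
        · have hmul : uj.val * m = vj.val * m + m := by rw [← h1]; ring
          split_ifs <;> omega
    have hbij := bijOn_helper (psiOdd m n) (m * n) hcard hinj hmaps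
    exact le_mcNH_of hadj0 _ (by rw [hcard]; exact hbij) hedge
end

section
/- For the cycle C_n on n ≥ 3 vertices, mc^{nh}_n(C_n) = ⌊(n−1)/2⌋. -/
open SimpleGraph

/-
A labeling attaining `⌊(n-1)/2⌋` puts `1, 2, …` on the even positions and the upper half on the
odd positions, so every edge joins the two halves, up to the closing edge, which for odd `n` joins
the labels `(n+1)/2` and `1`. Conversely, the vertex labelled `⌊(n-1)/2⌋ + 1` has two distinct
neighbours, and there is room for only one label at distance more than `⌊(n-1)/2⌋` from it.
-/

open Set

theorem mcNH_eq_of_bijOn {V : Type*} [Fintype V] {G : SimpleGraph V} {m : ℕ} (ψ : V → ℕ)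
    (hψ : BijOn ψ univ (Icc 1 (Fintype.card V)))
    (hψG : ∀ u v, G.Adj u v → m ≤ Nat.dist (ψ u) (ψ v))
    (hmax : ∀ φ : V → ℕ, BijOn φ univ (Icc 1 (Fintype.card V)) →
      ∃ u v, G.Adj u v ∧ Nat.dist (φ u) (φ v) ≤ m) :
    mcNH G = m := by
  refine IsGreatest.csSup_eq ⟨⟨ψ, hψ, hψG⟩, ?_⟩
  rintro k ⟨φ, hφ, hφG⟩
  obtain ⟨u, v, huv, hle⟩ := hmax φ hφ
  exact (hφG u v huv).trans hle

theorem exists_adj_dist_le_of_bijOn {V : Type*} {G : SimpleGraph V} {ψ : V → ℕ} {N : ℕ}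
    (hN : 0 < N) (hψ : BijOn ψ univ (Icc 1 N)) (hG : ∀ v, (G.neighborSet v).Nontrivial) :
    ∃ u v, G.Adj u v ∧ Nat.dist (ψ u) (ψ v) ≤ (N - 1) / 2 := by
  obtain ⟨v, -, hv⟩ := hψ.surjOn (show (N - 1) / 2 + 1 ∈ Icc 1 N from ⟨by omega, by omega⟩)
  obtain ⟨a, ha, b, hb, hab⟩ := hG v
  have hψab : ψ a ≠ ψ b := fun h => hab (hψ.injOn (mem_univ a) (mem_univ b) h)
  obtain ⟨ha1, haN⟩ := hψ.mapsTo (mem_univ a)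
  obtain ⟨hb1, hbN⟩ := hψ.mapsTo (mem_univ b)
  by_cases hva : Nat.dist (ψ v) (ψ a) ≤ (N - 1) / 2
  · exact ⟨v, a, ha, hva⟩
  · refine ⟨v, b, hb, ?_⟩
    simp only [Nat.dist] at hva ⊢
    omega

theorem cycleGraph_neighborSet_nontrivial {n : ℕ} (v : Fin (n + 3)) :
    ((cycleGraph (n + 3)).neighborSet v).Nontrivial := by
  rw [cycleGraph_neighborSet]
  refine nontrivial_pair ?_
  rw [ne_eq, sub_eq_iff_eq_add, add_assoc, left_eq_add]
  exact ne_of_beq_false rfl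

theorem cycleGraph_adj_val {n : ℕ} {u v : Fin n} (h : (cycleGraph n).Adj u v) :
    u.val = v.val + 1 ∨ (u.val = 0 ∧ v.val + 1 = n) ∨
      v.val = u.val + 1 ∨ (v.val = 0 ∧ u.val + 1 = n) := by
  have val_sub_eq_one (a b : Fin n) (hab : (a - b).val = 1) :
      a.val = b.val + 1 ∨ (a.val = 0 ∧ b.val + 1 = n) := by
    have := a.isLt
    rcases le_or_gt b a with h | h
    · rw [Fin.coe_sub_iff_le.mpr h] at hab
      omega
    · rw [Fin.coe_sub_iff_lt.mpr h, Fin.lt_def] at *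
      omega
  rw [cycleGraph_adj'] at h
  rcases h with h | h
  · exact or_assoc.mp (.inl (val_sub_eq_one u v h))
  · exact .inr (.inr (val_sub_eq_one v u h))

def cycleLabel (n : ℕ) (i : Fin n) : ℕ :=
  if i.val % 2 = 0 then i.val / 2 + 1 else i.val / 2 + 1 + (n + 1) / 2

theorem cycleLabel_bijOn (n : ℕ) : BijOn (cycleLabel n) univ (Icc 1 n) := by
  refine ⟨fun i _ => ?_, fun i _ j _ hij => ?_, fun y ⟨hy1, hyn⟩ => ?_⟩
  · have := i.isLt
    unfold cycleLabel
    constructor <;> split <;> omega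
  · have := i.isLt
    have := j.isLt
    unfold cycleLabel at hij
    ext
    split at hij <;> split at hij <;> omega
  · by_cases h : y ≤ (n + 1) / 2
    · refine ⟨⟨2 * (y - 1), by omega⟩, mem_univ _, ?_⟩
      simp only [cycleLabel]
      split <;> omega
    · refine ⟨⟨2 * (y - 1 - (n + 1) / 2) + 1, by omega⟩, mem_univ _, ?_⟩
      simp only [cycleLabel]
      split <;> omega

theorem le_dist_cycleLabel_of_adj {n : ℕ} {u v : Fin n} (h : (cycleGraph n).Adj u v) :
    (n - 1) / 2 ≤ Nat.dist (cycleLabel n u) (cycleLabel n v) := by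
  have := cycleGraph_adj_val h
  have := u.isLt
  have := v.isLt
  unfold cycleLabel Nat.dist
  split <;> split <;> omega

theorem stmt_18 (n : ℕ) (hn : 3 ≤ n) :
    mcNH (SimpleGraph.cycleGraph n) = (n - 1) / 2 := by
  obtain ⟨k, rfl⟩ : ∃ k, n = k + 3 := ⟨n - 3, by omega⟩
  refine mcNH_eq_of_bijOn (cycleLabel (k + 3)) ?_ (fun u v => le_dist_cycleLabel_of_adj)
    fun φ hφ => ?_
  · rw [Fintype.card_fin]
    exact cycleLabel_bijOn _
  · rw [Fintype.card_fin] at hφ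
    exact exists_adj_dist_le_of_bijOn (by omega) hφ cycleGraph_neighborSet_nontrivial
end

section
/- For the hypercube graph Q_n with n ≥ 2, mc^{nh}_{2^n}(Q_n) ≥ 2^{n−2}. -/
open SimpleGraph

/-- The `n`-cube: vertices are `Fin n → Bool`, adjacent iff they differ in
exactly one coordinate. -/
def hypercube (n : ℕ) : SimpleGraph (Fin n → Bool) where
  Adj x y := (Finset.univ.filter (fun i => x i ≠ y i)).card = 1
  symm := ⟨by intro x y h; simpa [ne_comm] using h⟩
  loopless := ⟨by intro x h; simp at h⟩

/-!
Label a vertex `x` of `Q_{m+2}` by `parity x * 2 ^ (m + 1)` plus the binary value of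
`x 1, …, x (m + 1)`, shifted by one. Adjacent vertices have opposite parity, so they land in
different halves of `{1, …, 2 ^ (m + 2)}`, while their offsets within a half differ by `0` or by
some `2 ^ k ≤ 2 ^ m`. Hence their labels differ by at least `2 ^ (m + 1) - 2 ^ m = 2 ^ m`.
-/

open Function Finset

theorem le_mcNH_of_injective {V : Type*} [Fintype V] {G : SimpleGraph V} {u₀ v₀ : V}
    (h₀ : G.Adj u₀ v₀) {ψ : V → ℕ} (hψ : Injective ψ) (hlt : ∀ v, ψ v < Fintype.card V) {m : ℕ}
    (hm : ∀ u v, G.Adj u v → m ≤ Nat.dist (ψ u) (ψ v)) : m ≤ mcNH G := by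
  -- the edge `u₀ v₀` bounds the set; for an edgeless graph it is all of `ℕ` and `sSup` is `0`
  refine le_csSup ⟨Fintype.card V, ?_⟩ ⟨(ψ · + 1), ⟨fun v _ => ?_, ?_, ?_⟩, ?_⟩
  · rintro k ⟨φ, hφ, hk⟩
    have hu := hφ.mapsTo (Set.mem_univ u₀)
    have hv := hφ.mapsTo (Set.mem_univ v₀)
    have := hk u₀ v₀ h₀
    simp only [Set.mem_Icc, Nat.dist] at hu hv this
    omega
  · have := hlt v
    simp only [Set.mem_Icc]
    omega
  · exact fun u _ v _ h => hψ (by simpa using h)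
  · intro a ⟨ha₁, ha₂⟩
    have hbij : Bijective fun v => (⟨ψ v, hlt v⟩ : Fin (Fintype.card V)) :=
      (Fintype.bijective_iff_injective_and_card _).2
        ⟨fun u v h => hψ (congrArg Fin.val h), (Fintype.card_fin _).symm⟩
    obtain ⟨v, hv⟩ := hbij.2 ⟨a - 1, by omega⟩
    refine ⟨v, Set.mem_univ v, show ψ v + 1 = a from ?_⟩
    simp only [Fin.mk.injEq] at hv
    omega
  · intro u v h
    simpa only [Nat.dist_add_add_right] using hm u v h

theorem hypercube_adj_iff {n : ℕ} {x y : Fin n → Bool} :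
    (hypercube n).Adj x y ↔ ∃ j, y = update x j (!x j) := by
  simp only [hypercube, card_eq_one, Finset.ext_iff, mem_filter, mem_univ, true_and,
    mem_singleton, funext_iff]
  refine exists_congr fun j => forall_congr' fun i => ?_
  rcases eq_or_ne i j with rfl | h
  · rw [update_self]
    cases x i <;> cases y i <;> simp
  · rw [update_of_ne h]
    cases x i <;> cases y i <;> simp [h]

namespace Hypercube

section Parity

variable {ι : Type*} [Fintype ι]

theorem sum_toNat_mul_update_true [DecidableEq ι] (x : ι → Bool) (j : ι) (w : ι → ℕ) :
    ∑ i, (update x j true i).toNat * w i = ∑ i, (update x j false i).toNat * w i + w j := by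
  rw [Fintype.sum_eq_add_sum_compl j, Fintype.sum_eq_add_sum_compl j (fun i => _ * _)]
  simp only [update_self, Bool.toNat_true, Bool.toNat_false, one_mul, zero_mul, zero_add]
  rw [add_comm]
  congr 1
  refine sum_congr rfl fun i hi => ?_
  rw [update_of_ne (by simpa using hi), update_of_ne (by simpa using hi)]

def parity (x : ι → Bool) : ℕ := (∑ i, (x i).toNat) % 2

theorem parity_le_one (x : ι → Bool) : parity x ≤ 1 := Nat.le_of_lt_succ (Nat.mod_lt _ two_pos)

theorem parity_update_true_add_false [DecidableEq ι] (x : ι → Bool) (j : ι) :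
    parity (update x j true) + parity (update x j false) = 1 := by
  have := sum_toNat_mul_update_true x j 1
  simp only [Pi.one_apply, mul_one] at this
  simp only [parity, this]
  omega

end Parity

variable {n m : ℕ}

def binaryValue (x : Fin n → Bool) : ℕ := ∑ i, (x i).toNat * 2 ^ (i : ℕ)

theorem binaryValue_eq_finFunctionFinEquiv (x : Fin n → Bool) :
    binaryValue x = finFunctionFinEquiv (finTwoEquiv.symm ∘ x) := by
  rw [finFunctionFinEquiv_apply, binaryValue]
  refine sum_congr rfl fun i _ => ?_
  cases hxi : x i <;> simp [finTwoEquiv, hxi]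

theorem binaryValue_lt (x : Fin n → Bool) : binaryValue x < 2 ^ n := by
  rw [binaryValue_eq_finFunctionFinEquiv]
  exact Fin.isLt _

theorem binaryValue_injective : Injective (binaryValue (n := n)) := fun x y h => by
  simp only [binaryValue_eq_finFunctionFinEquiv, Fin.val_inj, EmbeddingLike.apply_eq_iff_eq] at h
  exact finTwoEquiv.symm.injective.comp_left h

theorem binaryValue_update_true (x : Fin n → Bool) (j : Fin n) :
    binaryValue (update x j true) = binaryValue (update x j false) + 2 ^ (j : ℕ) :=
  sum_toNat_mul_update_true x j _

theorem parity_cons (b : Bool) (x : Fin n → Bool) :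
    parity (Fin.cons b x : Fin (n + 1) → Bool) = (b.toNat + parity x) % 2 := by
  simp only [parity, Fin.sum_univ_succ, Fin.cons_zero, Fin.cons_succ, Nat.add_mod_mod]

def parityLabel (x : Fin (m + 1) → Bool) : ℕ := parity x * 2 ^ m + binaryValue (Fin.tail x)

theorem parityLabel_lt (x : Fin (m + 1) → Bool) : parityLabel x < 2 ^ (m + 1) := by
  have := binaryValue_lt (Fin.tail x)
  have := parity_le_one x
  rw [parityLabel, pow_succ]
  interval_cases parity x <;> omega

theorem parityLabel_injective : Injective (parityLabel (m := m)) := by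
  intro x y h
  have hx := binaryValue_lt (Fin.tail x)
  have hy := binaryValue_lt (Fin.tail y)
  have hpx := parity_le_one x
  have hpy := parity_le_one y
  obtain ⟨hp, hb⟩ :
      parity x = parity y ∧ binaryValue (Fin.tail x) = binaryValue (Fin.tail y) := by
    unfold parityLabel at h
    interval_cases parity x <;> interval_cases parity y <;> omega
  have htail := binaryValue_injective hb
  have hcx := parity_cons (x 0) (Fin.tail x)
  have hcy := parity_cons (y 0) (Fin.tail y)
  rw [Fin.cons_self_tail] at hcx hcy
  have h0 : x 0 = y 0 := by
    cases hx0 : x 0 <;> cases hy0 : y 0 <;> simp_all <;> omega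
  funext i
  exact Fin.cases h0 (fun k => congrFun htail k) i

theorem dist_parityLabel_update (z : Fin (m + 2) → Bool) (j : Fin (m + 2)) :
    2 ^ m ≤ Nat.dist (parityLabel (update z j false)) (parityLabel (update z j true)) := by
  obtain ⟨d, hd, htail⟩ : ∃ d ≤ 2 ^ m, binaryValue (Fin.tail (update z j true)) =
      binaryValue (Fin.tail (update z j false)) + d := by
    cases j using Fin.cases with
    | zero => exact ⟨0, Nat.zero_le _, by simp only [Fin.tail_update_zero, add_zero]⟩
    | succ k =>
      exact ⟨2 ^ (k : ℕ), Nat.pow_le_pow_right two_pos (Nat.lt_succ_iff.1 k.2),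
        by simp only [Fin.tail_update_succ, binaryValue_update_true]⟩
  have hpar := parity_update_true_add_false z j
  simp only [parityLabel, Nat.dist, htail, pow_succ]
  obtain ⟨hp, hq⟩ | ⟨hp, hq⟩ :
      (parity (update z j false) = 0 ∧ parity (update z j true) = 1) ∨
      (parity (update z j false) = 1 ∧ parity (update z j true) = 0) := by omega
  all_goals rw [hp, hq]; omega

theorem le_dist_parityLabel_of_adj {u v : Fin (m + 2) → Bool}
    (h : (hypercube (m + 2)).Adj u v) :
    2 ^ m ≤ Nat.dist (parityLabel u) (parityLabel v) := by
  obtain ⟨j, rfl⟩ := hypercube_adj_iff.1 h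
  have := dist_parityLabel_update u j
  cases hu : u j
  · rwa [← hu, update_eq_self] at this
  · rwa [← hu, update_eq_self, Nat.dist_comm] at this

end Hypercube

theorem stmt_19 (n : ℕ) (hn : 2 ≤ n) :
    2 ^ (n - 2) ≤ mcNH (hypercube n) := by
  obtain ⟨m, rfl⟩ : ∃ m, n = m + 2 := ⟨n - 2, by omega⟩
  have hcard : Fintype.card (Fin (m + 2) → Bool) = 2 ^ (m + 2) := by simp
  rw [Nat.add_sub_cancel]
  exact le_mcNH_of_injective (u₀ := fun _ => false) (hypercube_adj_iff.2 ⟨0, rfl⟩)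
    Hypercube.parityLabel_injective (fun x => hcard ▸ Hypercube.parityLabel_lt x)
    (fun _ _ => Hypercube.le_dist_parityLabel_of_adj)
end
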